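/- arXiv:1602.02860 — 7 statements merged into one kernel-verified Lean document; each statement's English description precedes it below -/
import Mathlib

section
/- For the linearized closed-loop system whose characteristic polynomial under the scaling attack is P(z) = (h+1)(z−1) + 2η(1 + ργμh + h − ρh), with h > 0, ρ ∈ (0,1], γμ > 0, η ∈ (0,1): the unique root of P(z) lies strictly inside the unit disk if and only if 0 < η < (h+1)/(h + 1 + ρh(γμ − 1)). -/
/-! The characteristic polynomial is linear with positive leading coefficient `h + 1`, so its only
root is the real number `1 - 2ηD/(h + 1)`, where `D = h + 1 + ρh(γμ - 1) > 0`. That root lies in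
the open unit disk iff `0 < 2ηD/(h + 1) < 2`, i.e. iff `0 < η < (h + 1)/D`. -/

theorem mul_sub_one_add_eq_zero_iff {K : Type*} [Field K] {a c z : K} (ha : a ≠ 0) :
    a * (z - 1) + c = 0 ↔ z = 1 - c / a := by
  constructor
  · intro h
    field_simp
    linear_combination h
  · rintro rfl
    field_simp
    ring

theorem abs_one_sub_lt_one_iff {t : ℝ} : |1 - t| < 1 ↔ 0 < t ∧ t < 2 := by
  rw [abs_lt]
  constructor <;> rintro ⟨h₁, h₂⟩ <;> constructor <;> linarith

theorem abs_one_sub_two_mul_div_lt_one_iff {a D η : ℝ} (ha : 0 < a) (hD : 0 < D) :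
    |1 - 2 * η * D / a| < 1 ↔ 0 < η ∧ η < a / D := by
  rw [abs_one_sub_lt_one_iff, div_pos_iff_of_pos_right ha, mul_pos_iff_of_pos_right hD,
    mul_pos_iff_of_pos_left two_pos, div_lt_iff₀ ha, lt_div_iff₀ hD]
  constructor <;> rintro ⟨h₁, h₂⟩ <;> constructor <;> linarith

theorem stmt4_general (h ρ gm η : ℝ) (hh : 0 < h) (hρ1 : 0 < ρ) (hρ2 : ρ ≤ 1)
    (hgm : 0 < gm) :
    (∃! z : ℂ, ((h + 1 : ℝ) : ℂ) * (z - 1) +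
      ((2 * η * (1 + ρ * gm * h + h - ρ * h) : ℝ) : ℂ) = 0) ∧
    (∀ z : ℂ, ((h + 1 : ℝ) : ℂ) * (z - 1) +
      ((2 * η * (1 + ρ * gm * h + h - ρ * h) : ℝ) : ℂ) = 0 →
      (‖z‖ < 1 ↔ 0 < η ∧ η < (h + 1) / (h + 1 + ρ * h * (gm - 1)))) := by
  have ha : 0 < h + 1 := by linarith
  have hD : 0 < h + 1 + ρ * h * (gm - 1) := by
    nlinarith [mul_pos (mul_pos hρ1 hgm) hh, mul_nonneg (sub_nonneg.2 hρ2) hh.le]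
  rw [show 1 + ρ * gm * h + h - ρ * h = h + 1 + ρ * h * (gm - 1) by ring]
  set D := h + 1 + ρ * h * (gm - 1)
  have hroot : ∀ z : ℂ, ((h + 1 : ℝ) : ℂ) * (z - 1) + ((2 * η * D : ℝ) : ℂ) = 0 ↔
      z = ((1 - 2 * η * D / (h + 1) : ℝ) : ℂ) := fun z => by
    rw [mul_sub_one_add_eq_zero_iff (by exact_mod_cast ha.ne')]
    push_cast
    rfl
  refine ⟨⟨_, (hroot _).2 rfl, fun z hz => (hroot z).1 hz⟩, fun z hz => ?_⟩
  rw [(hroot z).1 hz, Complex.norm_real, Real.norm_eq_abs,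
    abs_one_sub_two_mul_div_lt_one_iff ha hD]

/-- Scaling-attack characteristic polynomial P(z)=(h+1)(z-1)+2η(1+ργμh+h-ρh):
it has a unique root, and the root lies strictly inside the unit disk iff
0 < η < (h+1)/(h+1+ρh(γμ-1)). -/
theorem stmt4 (h ρ gm η : ℝ) (hh : 0 < h) (hρ1 : 0 < ρ) (hρ2 : ρ ≤ 1)
    (hgm : 0 < gm) (hη1 : 0 < η) (hη2 : η < 1) :
    (∃! z : ℂ, ((h + 1 : ℝ) : ℂ) * (z - 1) +
      ((2 * η * (1 + ρ * gm * h + h - ρ * h) : ℝ) : ℂ) = 0) ∧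
    (∀ z : ℂ, ((h + 1 : ℝ) : ℂ) * (z - 1) +
      ((2 * η * (1 + ρ * gm * h + h - ρ * h) : ℝ) : ℂ) = 0 →
      (‖z‖ < 1 ↔ 0 < η ∧ η < (h + 1) / (h + 1 + ρ * h * (gm - 1)))) :=
  stmt4_general h ρ gm η hh hρ1 hρ2 hgm
end

section
/- Under the CEO demand model, if the scaling factor satisfies γ ≥ 1 (price amplification), then for every h > 0 and every η ∈ (0,1), the root of the scaling-attack characteristic polynomial P(z) = (h+1)(z−1) + 2η(1 + ρhγ^ε + h − ρh) lies strictly inside the unit disk; i.e., the system is stable regardless of h. -/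
/-! Since `γ ≥ 1` and `ε ≤ 0`, the factor `γ ^ ε` lies in `[0, 1]`, so the coefficient
`A = 1 + ρhγ^ε + h - ρh` lies in `(0, 1 + h]`. The only root of `P` is the real number
`1 - 2ηA / (h + 1)`, and `0 < 2ηA < 2(h + 1)` puts it in `(-1, 1)`. -/

theorem norm_lt_one_of_mul_sub_one_add_eq_zero {a b : ℝ} (hb : 0 < b) (hba : b < 2 * a)
    {z : ℂ} (hz : (a : ℂ) * (z - 1) + b = 0) : ‖z‖ < 1 := by
  have ha : 0 < a := by linarith
  have hz_eq : z = ((1 - b / a : ℝ) : ℂ) := by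
    have : (a : ℂ) ≠ 0 := by exact_mod_cast ha.ne'
    push_cast
    field_simp
    linear_combination hz
  have hba' : b / a < 2 := (div_lt_iff₀ ha).mpr (by linarith)
  rw [hz_eq, Complex.norm_real, Real.norm_eq_abs, abs_lt]
  constructor <;> linarith [div_pos hb ha]

theorem one_add_mul_mul_add_sub_mul_mem_Ioc {ρ h p : ℝ} (hρ0 : 0 ≤ ρ) (hρ1 : ρ ≤ 1)
    (hh : 0 ≤ h) (hp0 : 0 ≤ p) (hp1 : p ≤ 1) :
    1 + ρ * h * p + h - ρ * h ∈ Set.Ioc 0 (1 + h) := by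
  have hρh : 0 ≤ ρ * h := mul_nonneg hρ0 hh
  constructor <;> nlinarith [mul_nonneg hρh hp0, mul_le_of_le_one_right hρh hp1]

theorem stmt7_general (ρ ε γ : ℝ) (hρ1 : 0 < ρ) (hρ2 : ρ ≤ 1)
    (hε2 : ε < 0) (hγ : 1 ≤ γ) :
    ∀ h : ℝ, 0 < h → ∀ η : ℝ, 0 < η → η < 1 →
      ∀ z : ℂ, ((h + 1 : ℝ) : ℂ) * (z - 1) +
        ((2 * η * (1 + ρ * h * γ ^ ε + h - ρ * h) : ℝ) : ℂ) = 0 →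
        ‖z‖ < 1 := by
  intro h hh η hη0 hη1 z hz
  obtain ⟨hA0, hA1⟩ := one_add_mul_mul_add_sub_mul_mem_Ioc hρ1.le hρ2 hh.le
    (Real.rpow_nonneg (zero_le_one.trans hγ) ε) (Real.rpow_le_one_of_one_le_of_nonpos hγ hε2.le)
  refine norm_lt_one_of_mul_sub_one_add_eq_zero (by positivity) ?_ hz
  calc 2 * η * (1 + ρ * h * γ ^ ε + h - ρ * h)
      < 2 * (1 + ρ * h * γ ^ ε + h - ρ * h) := by gcongr; linarith
    _ ≤ 2 * (h + 1) := by linarith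

/-- Scaling attack under CEO demand with amplification γ ≥ 1: for every h > 0
and η ∈ (0,1) the root of P(z)=(h+1)(z-1)+2η(1+ρhγ^ε+h-ρh) lies strictly
inside the unit disk. -/
theorem stmt7 (ρ ε γ : ℝ) (hρ1 : 0 < ρ) (hρ2 : ρ ≤ 1)
    (hε1 : -1 < ε) (hε2 : ε < 0) (hγ : 1 ≤ γ) :
    ∀ h : ℝ, 0 < h → ∀ η : ℝ, 0 < η → η < 1 →
      ∀ z : ℂ, ((h + 1 : ℝ) : ℂ) * (z - 1) +
        ((2 * η * (1 + ρ * h * γ ^ ε + h - ρ * h) : ℝ) : ℂ) = 0 →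
        ‖z‖ < 1 :=
  stmt7_general ρ ε γ hρ1 hρ2 hε2 hγ
end

section
/- Let P(z) = (h+1)z^{τ+1} + (2η + 2η(1−ρ)h − h − 1)z^τ + 2ηρh, with h > 0, η ∈ (0,1), ρ ∈ (0, 1/2], and τ a positive integer. Then every complex root of P lies strictly inside the open unit disk. -/
/-! If `|z| ≥ 1` then `|z^τ ((h+1) z + a)| ≥ (h+1) - |a|`, which exceeds the constant term `b`
as soon as `|a| + |b| < h + 1`; for the delay-attack coefficients this inequality reduces to
`η < 1` when `a ≥ 0`, and to `2η (1 + (1 - 2ρ) h) > 0` when `a < 0`. -/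

theorem norm_lt_one_of_mul_pow_succ_add_mul_pow_add_eq_zero {𝕜 : Type*} [NormedField 𝕜]
    {n : ℕ} {c a b z : 𝕜} (hcoef : ‖a‖ + ‖b‖ < ‖c‖)
    (hz : c * z ^ (n + 1) + a * z ^ n + b = 0) : ‖z‖ < 1 := by
  by_contra! hz1
  have hb : ‖b‖ = ‖z‖ ^ n * ‖c * z + a‖ := by
    rw [← norm_pow, ← norm_mul, ← norm_neg b, neg_eq_of_add_eq_zero_left hz]
    ring_nf
  have hlin : ‖c‖ - ‖a‖ ≤ ‖c * z + a‖ := by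
    have := norm_sub_norm_le (c * z) (-a)
    rw [norm_mul, norm_neg, sub_neg_eq_add] at this
    nlinarith [norm_nonneg c]
  have hpow : ‖c * z + a‖ ≤ ‖z‖ ^ n * ‖c * z + a‖ :=
    le_mul_of_one_le_left (norm_nonneg _) (one_le_pow₀ hz1)
  linarith

theorem abs_add_abs_lt_of_delay_attack {h η ρ : ℝ} (hh : 0 < h) (hη1 : 0 < η) (hη2 : η < 1)
    (hρ1 : 0 < ρ) (hρ2 : ρ ≤ 1 / 2) :
    |2 * η + 2 * η * (1 - ρ) * h - h - 1| + |2 * η * ρ * h| < h + 1 := by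
  rw [abs_of_pos (by positivity : 0 < 2 * η * ρ * h)]
  rcases le_or_gt 0 (2 * η + 2 * η * (1 - ρ) * h - h - 1) with ha | ha
  · rw [abs_of_nonneg ha]
    nlinarith
  · rw [abs_of_neg ha]
    nlinarith [mul_pos hη1 hh, mul_nonneg hη1.le (mul_nonneg hh.le (by linarith : 0 ≤ 1 - 2 * ρ))]

theorem stmt9_general (h η ρ : ℝ) (τ : ℕ) (hh : 0 < h)
    (hη1 : 0 < η) (hη2 : η < 1) (hρ1 : 0 < ρ) (hρ2 : ρ ≤ 1 / 2) :
    ∀ z : ℂ, ((h + 1 : ℝ) : ℂ) * z ^ (τ + 1) +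
      ((2 * η + 2 * η * (1 - ρ) * h - h - 1 : ℝ) : ℂ) * z ^ τ +
      ((2 * η * ρ * h : ℝ) : ℂ) = 0 →
      ‖z‖ < 1 := by
  intro z hz
  refine norm_lt_one_of_mul_pow_succ_add_mul_pow_add_eq_zero ?_ hz
  simp only [Complex.norm_real, Real.norm_eq_abs, abs_of_pos (by linarith : (0 : ℝ) < h + 1)]
  exact abs_add_abs_lt_of_delay_attack hh hη1 hη2 hρ1 hρ2

/-- Delay-attack characteristic polynomial
P(z)=(h+1)z^(τ+1)+(2η+2η(1-ρ)h-h-1)z^τ+2ηρh with ρ ∈ (0,1/2]: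
every complex root lies strictly inside the open unit disk. -/
theorem stmt9 (h η ρ : ℝ) (τ : ℕ) (hτ : 1 ≤ τ) (hh : 0 < h)
    (hη1 : 0 < η) (hη2 : η < 1) (hρ1 : 0 < ρ) (hρ2 : ρ ≤ 1 / 2) :
    ∀ z : ℂ, ((h + 1 : ℝ) : ℂ) * z ^ (τ + 1) +
      ((2 * η + 2 * η * (1 - ρ) * h - h - 1 : ℝ) : ℂ) * z ^ τ +
      ((2 * η * ρ * h : ℝ) : ℂ) = 0 →
      ‖z‖ < 1 :=
  stmt9_general h η ρ τ hh hη1 hη2 hρ1 hρ2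
end

section
/- Let u₁ = h+1, u₂ = 2η + 2η(1−ρ)h − h − 1, u₃ = 2ηρh with h > 0, η ∈ (0,1), ρ ∈ (0, 1/2]. Then (u₁ − |u₂|)² − u₃² > 0; equivalently, for any θ, g(1) := u₁² + 2u₁u₂cos θ + u₂² − u₃² > 0. -/
/-!
Write u₁ = h + 1, u₂ = 2η + 2η(1 - ρ)h - h - 1 and u₃ = 2ηρh. Since u₂ + u₃ = (2η - 1)u₁, the
conditions 0 < η < 1 and 2ρ ≤ 1 give |u₂| < u₁ - u₃ with u₃ ≥ 0, hence (u₁ - |u₂|)² > u₃².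
The second claim follows because u₁² + 2u₁u₂ cos θ + u₂² ≥ u₁² - 2u₁|u₂| + u₂² = (u₁ - |u₂|)².
-/

theorem sq_sub_abs_sub_sq_pos {a b c : ℝ} (hc : 0 ≤ c) (hb : |b| < a - c) :
    0 < (a - |b|) ^ 2 - c ^ 2 := by
  have : c ^ 2 < (a - |b|) ^ 2 := pow_lt_pow_left₀ (by linarith) hc two_ne_zero
  linarith

theorem sq_sub_abs_le_add_mul_cos {a : ℝ} (b θ : ℝ) (ha : 0 ≤ a) :
    (a - |b|) ^ 2 ≤ a ^ 2 + 2 * a * b * Real.cos θ + b ^ 2 := by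
  have hcos : -|b| ≤ b * Real.cos θ := by
    have : |b * Real.cos θ| ≤ |b| := by
      rw [abs_mul]
      exact mul_le_of_le_one_right (abs_nonneg b) (Real.abs_cos_le_one θ)
    linarith [neg_abs_le (b * Real.cos θ)]
  have hexpand : (a - |b|) ^ 2 = a ^ 2 - 2 * a * |b| + b ^ 2 := by
    rw [sub_sq, sq_abs]
  nlinarith [mul_le_mul_of_nonneg_left hcos ha]

theorem abs_delay_coeff_lt {h η ρ : ℝ} (hh : 0 ≤ h) (hη1 : 0 < η) (hη2 : η < 1)
    (hρ2 : ρ ≤ 1 / 2) :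
    |2 * η + 2 * η * (1 - ρ) * h - h - 1| < h + 1 - 2 * η * ρ * h := by
  have hupper : 0 < (1 - η) * (h + 1) := mul_pos (by linarith) (by linarith)
  have hlower : 0 < η * (h + 1 - 2 * ρ * h) := mul_pos hη1 (by nlinarith)
  rw [abs_lt]
  constructor <;> linarith

/-- Key inequality for delay-attack stability: with u₁ = h+1,
u₂ = 2η+2η(1-ρ)h-h-1, u₃ = 2ηρh and ρ ∈ (0,1/2], we have
(u₁-|u₂|)² - u₃² > 0 and, for any θ, u₁² + 2u₁u₂cos θ + u₂² - u₃² > 0. -/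
theorem stmt11 (h η ρ : ℝ) (hh : 0 < h) (hη1 : 0 < η) (hη2 : η < 1)
    (hρ1 : 0 < ρ) (hρ2 : ρ ≤ 1 / 2) :
    (0 < ((h + 1) - |2 * η + 2 * η * (1 - ρ) * h - h - 1|) ^ 2 - (2 * η * ρ * h) ^ 2) ∧
    ∀ θ : ℝ,
      0 < (h + 1) ^ 2 + 2 * (h + 1) * (2 * η + 2 * η * (1 - ρ) * h - h - 1) * Real.cos θ
        + (2 * η + 2 * η * (1 - ρ) * h - h - 1) ^ 2 - (2 * η * ρ * h) ^ 2 := by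
  have hpos := sq_sub_abs_sub_sq_pos (by positivity) (abs_delay_coeff_lt hh.le hη1 hη2 hρ2)
  refine ⟨hpos, fun θ => hpos.trans_le ?_⟩
  exact sub_le_sub_right (sq_sub_abs_le_add_mul_cos _ θ (by positivity)) _
end

section
/- Let u₁ > 0, u₂ ∈ ℝ with u₁ − |u₂| > 0, and τ ∈ ℤ⁺. Define m(A) = u₁²(2τ+2)A + 2u₁u₂(2τ+1)cos θ + 2τu₂²/A for A > 0. Then m is convex on (0,∞), attains its minimum at A* = |u₂/u₁|·√(τ/(τ+1)) < 1, and m(1) ≥ 2(u₁ − |u₂|)(τ(u₁ − |u₂|) + u₁) > 0. Consequently m(A) > 0 for all A ≥ 1. -/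
/-!
Write `m A = a * A + c + b / A` with `a = u₁² (2τ + 2)`, `b = 2τ u₂²`. Since `A* ² · a = b`,
`m A - m A* = a (A - A*)² / A ≥ 0`, and `m` increases on `[A*, ∞)`. As `A* < 1`, every
`A ≥ 1` has `m A ≥ m 1`, and bounding `u₂ cos θ ≥ -|u₂|` turns `m 1` into
`2 (u₁ - |u₂|) (τ (u₁ - |u₂|) + u₁)`.
-/

open Set

section MulAddAddDiv

variable {a b c s : ℝ}

theorem convexOn_Ioi_mul_add_add_div (ha : 0 ≤ a) (hb : 0 ≤ b) :
    ConvexOn ℝ (Ioi 0) fun x : ℝ => a * x + c + b / x := by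
  have hlin : ConvexOn ℝ (Ioi 0) fun x : ℝ => a * x + c :=
    ((convexOn_id (convex_Ioi 0)).smul ha).add_const c
  have hinv : ConvexOn ℝ (Ioi 0) fun x : ℝ => b * x ^ (-1 : ℤ) :=
    (convexOn_zpow (-1)).smul hb
  refine (hlin.add hinv).congr fun x _ => ?_
  simp only [Pi.add_apply, zpow_neg_one, div_eq_mul_inv]

theorem isMinOn_Ioi_mul_add_add_div (ha : 0 ≤ a) (hs : a * s ^ 2 = b) :
    IsMinOn (fun x : ℝ => a * x + c + b / x) (Ioi 0) s := by
  intro x (hx : 0 < x)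
  subst hs
  -- `s ^ 2 / s = s` also for `s = 0`, so no case split on `s` is needed
  have hss : s ^ 2 / s = s := by rw [sq, mul_self_div_self]
  have hdiff : a * x + c + a * s ^ 2 / x - (a * s + c + a * s ^ 2 / s)
      = a * (x - s) ^ 2 / x := by
    rw [mul_div_assoc a (s ^ 2) s, hss]
    field_simp
    ring
  have : 0 ≤ a * (x - s) ^ 2 / x := by positivity
  show a * s + c + a * s ^ 2 / s ≤ a * x + c + a * s ^ 2 / x
  linarith

theorem monotoneOn_mul_add_add_div (ha : 0 ≤ a) (hs₀ : 0 ≤ s) (hs : a * s ^ 2 = b) :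
    MonotoneOn (fun x : ℝ => a * x + c + b / x) (Ici s ∩ Ioi 0) := by
  rintro x ⟨hsx, hx⟩ y ⟨-, hy⟩ hxy
  simp only [mem_Ici, mem_Ioi] at hsx hx hy
  subst hs
  have hdiff : a * y + c + a * s ^ 2 / y - (a * x + c + a * s ^ 2 / x)
      = a * (y - x) * (x * y - s ^ 2) / (x * y) := by
    field_simp
    ring
  have hsq : s ^ 2 ≤ x * y := by nlinarith
  have : 0 ≤ a * (y - x) * (x * y - s ^ 2) / (x * y) := by
    apply div_nonneg _ (by positivity)
    exact mul_nonneg (mul_nonneg ha (sub_nonneg.2 hxy)) (sub_nonneg.2 hsq)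
  show a * x + c + a * s ^ 2 / x ≤ a * y + c + a * s ^ 2 / y
  linarith

end MulAddAddDiv

theorem neg_abs_le_mul_cos (u θ : ℝ) : -|u| ≤ u * Real.cos θ := by
  have : |u * Real.cos θ| ≤ |u| := by
    rw [abs_mul]
    exact mul_le_of_le_one_right (abs_nonneg u) (Real.abs_cos_le_one θ)
  exact (abs_le.mp this).1

theorem abs_div_mul_sqrt_div_succ_lt_one {u₁ u₂ t : ℝ} (hgap : |u₂| < u₁) (ht : 0 ≤ t) :
    |u₂ / u₁| * Real.sqrt (t / (t + 1)) < 1 := by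
  have hu₁ : 0 < u₁ := (abs_nonneg u₂).trans_lt hgap
  have hq : |u₂ / u₁| < 1 := by
    rwa [abs_div, abs_of_pos hu₁, div_lt_one hu₁]
  have hr : Real.sqrt (t / (t + 1)) ≤ 1 :=
    Real.sqrt_le_one.mpr ((div_le_one (by positivity)).mpr (by linarith))
  calc |u₂ / u₁| * Real.sqrt (t / (t + 1)) ≤ |u₂ / u₁| := mul_le_of_le_one_right (abs_nonneg _) hr
    _ < 1 := hq

theorem stmt13_general (u₁ u₂ θ : ℝ) (τ : ℕ) (hgap : 0 < u₁ - |u₂|) :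
    let m : ℝ → ℝ := fun A =>
      u₁ ^ 2 * (2 * (τ : ℝ) + 2) * A + 2 * u₁ * u₂ * (2 * (τ : ℝ) + 1) * Real.cos θ
        + 2 * (τ : ℝ) * u₂ ^ 2 / A
    ConvexOn ℝ (Set.Ioi 0) m ∧
    IsMinOn m (Set.Ioi 0) (|u₂ / u₁| * Real.sqrt ((τ : ℝ) / ((τ : ℝ) + 1))) ∧
    |u₂ / u₁| * Real.sqrt ((τ : ℝ) / ((τ : ℝ) + 1)) < 1 ∧
    2 * (u₁ - |u₂|) * ((τ : ℝ) * (u₁ - |u₂|) + u₁) ≤ m 1 ∧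
    0 < m 1 ∧
    ∀ A : ℝ, 1 ≤ A → 0 < m A := by
  intro m
  have hu₁ : 0 < u₁ := hgap.trans_le (sub_le_self _ (abs_nonneg u₂))
  set A₀ := |u₂ / u₁| * Real.sqrt ((τ : ℝ) / ((τ : ℝ) + 1))
  have hτ : (0 : ℝ) ≤ τ := τ.cast_nonneg
  have hA₀ : u₁ ^ 2 * (2 * (τ : ℝ) + 2) * A₀ ^ 2 = 2 * (τ : ℝ) * u₂ ^ 2 := by
    rw [mul_pow, sq_abs, Real.sq_sqrt (by positivity)]
    field_simp
  have hA₀_nonneg : 0 ≤ A₀ := by positivity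
  have hA₀_lt : A₀ < 1 := abs_div_mul_sqrt_div_succ_lt_one (by linarith) hτ
  have hm₁ : 2 * (u₁ - |u₂|) * ((τ : ℝ) * (u₁ - |u₂|) + u₁) ≤ m 1 := by
    have hcos := mul_le_mul_of_nonneg_left (neg_abs_le_mul_cos u₂ θ)
      (by positivity : 0 ≤ 2 * u₁ * (2 * (τ : ℝ) + 1))
    simp only [m, div_one]
    nlinarith [sq_abs u₂]
  have hm₁_pos : 0 < m 1 := hm₁.trans_lt' (by positivity)
  refine ⟨convexOn_Ioi_mul_add_add_div (by positivity) (by positivity),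
    isMinOn_Ioi_mul_add_add_div (by positivity) hA₀, hA₀_lt, hm₁, hm₁_pos, fun A hA => ?_⟩
  have hmono := monotoneOn_mul_add_add_div (c := 2 * u₁ * u₂ * (2 * (τ : ℝ) + 1) * Real.cos θ)
    (by positivity) hA₀_nonneg hA₀
  exact hm₁_pos.trans_le
    (hmono ⟨hA₀_lt.le, one_pos (α := ℝ)⟩ ⟨hA₀_lt.le.trans hA, one_pos.trans_le hA⟩ hA)

/-- Auxiliary function m(A)=u₁²(2τ+2)A + 2u₁u₂(2τ+1)cos θ + 2τu₂²/A with
u₁ > |u₂|: m is convex on (0,∞), attains its minimum at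
A* = |u₂/u₁|·√(τ/(τ+1)) < 1, m(1) ≥ 2(u₁-|u₂|)(τ(u₁-|u₂|)+u₁) > 0, and
m(A) > 0 for all A ≥ 1. -/
theorem stmt13 (u₁ u₂ θ : ℝ) (τ : ℕ) (hτ : 1 ≤ τ)
    (hu₁ : 0 < u₁) (hgap : 0 < u₁ - |u₂|) :
    let m : ℝ → ℝ := fun A =>
      u₁ ^ 2 * (2 * (τ : ℝ) + 2) * A + 2 * u₁ * u₂ * (2 * (τ : ℝ) + 1) * Real.cos θ
        + 2 * (τ : ℝ) * u₂ ^ 2 / A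
    ConvexOn ℝ (Set.Ioi 0) m ∧
    IsMinOn m (Set.Ioi 0) (|u₂ / u₁| * Real.sqrt ((τ : ℝ) / ((τ : ℝ) + 1))) ∧
    |u₂ / u₁| * Real.sqrt ((τ : ℝ) / ((τ : ℝ) + 1)) < 1 ∧
    2 * (u₁ - |u₂|) * ((τ : ℝ) * (u₁ - |u₂|) + u₁) ≤ m 1 ∧
    0 < m 1 ∧
    ∀ A : ℝ, 1 ≤ A → 0 < m A :=
  stmt13_general u₁ u₂ θ τ hgap
end

section
/- Consider the one-step-delay attack characteristic polynomial P(z) = (h+1)z² + (2η + 2η(1−ρ)h − h − 1)z + 2ηρh with h > 0, ρ ∈ (1/2, 1], η ∈ (0,1). If 0 < η < 1/(2ρ), then for every h > 0 both roots of P lie strictly inside the unit disk. -/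
/- Jury's criterion for a real quadratic `a z² + b z + c`: the conditions `c < a`, `P(1) > 0`,
`P(-1) > 0` already force `a > 0` (since `2a > a + c > |b|`). A real root `x` with `x ≥ 1` or
`x ≤ -1` is excluded by the factorisations `x P(1) = (x - 1)(c - a x)` and
`x P(-1) = (x + 1)(a x + c)`; a non-real root satisfies `2 a Re z + b = 0`, and then the real
part of the equation reads `a ‖z‖² = c < a`. For the delay-attack polynomial
`P(1) = 2η(h + 1)`, `P(-1) = 2(1 - η)(h + 1) + 4ηρh` and `c = 2ηρh < h < a` because `2ηρ < 1`. -/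

lemma abs_lt_one_of_quadratic_eq_zero {a b c x : ℝ} (hca : c < a) (h1 : 0 < a + b + c)
    (hm1 : 0 < a - b + c) (hx : a * x ^ 2 + b * x + c = 0) : |x| < 1 := by
  have ha : 0 < a := by linarith
  rw [abs_lt]
  constructor
  · by_contra! hle
    have hfac : x * (a - b + c) = (x + 1) * (a * x + c) := by linear_combination -hx
    nlinarith [mul_nonneg_of_nonpos_of_nonpos (by linarith : x + 1 ≤ 0)
      (by nlinarith : a * x + c ≤ 0)]
  · by_contra! hge
    have hfac : x * (a + b + c) = (x - 1) * (c - a * x) := by linear_combination hx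
    nlinarith [mul_nonpos_of_nonneg_of_nonpos (by linarith : 0 ≤ x - 1)
      (by nlinarith : c - a * x ≤ 0)]

lemma Complex.re_im_of_quadratic_eq_zero {a b c : ℝ} {z : ℂ}
    (hz : (a : ℂ) * z ^ 2 + b * z + c = 0) :
    a * (z.re ^ 2 - z.im ^ 2) + b * z.re + c = 0 ∧ z.im * (2 * a * z.re + b) = 0 := by
  have hre := congrArg Complex.re hz
  have him := congrArg Complex.im hz
  simp only [pow_two, Complex.add_re, Complex.add_im, Complex.mul_re, Complex.mul_im,
    Complex.ofReal_re, Complex.ofReal_im, Complex.zero_re, Complex.zero_im] at hre him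
  exact ⟨by linear_combination hre, by linear_combination him⟩

lemma Complex.norm_lt_one_of_quadratic_eq_zero {a b c : ℝ} {z : ℂ} (hca : c < a)
    (h1 : 0 < a + b + c) (hm1 : 0 < a - b + c)
    (hz : (a : ℂ) * z ^ 2 + b * z + c = 0) : ‖z‖ < 1 := by
  obtain ⟨hre, him⟩ := Complex.re_im_of_quadratic_eq_zero hz
  rcases mul_eq_zero.mp him with hreal | hb
  · have hx : a * z.re ^ 2 + b * z.re + c = 0 := by simpa [hreal] using hre
    have := abs_lt_one_of_quadratic_eq_zero hca h1 hm1 hx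
    rwa [Complex.abs_re_eq_norm.mpr hreal] at this
  · have ha : 0 < a := by linarith
    have hnormSq : a * Complex.normSq z = c := by
      rw [Complex.normSq_apply]
      linear_combination -hre + z.re * hb
    have : Complex.normSq z < 1 := by nlinarith
    rwa [Complex.normSq_eq_norm_sq, sq_lt_one_iff₀ (norm_nonneg z)] at this

theorem stmt15_general (ρ η : ℝ) (hρ1 : 1 / 2 < ρ)
    (hη1 : 0 < η) (hη3 : η < 1 / (2 * ρ)) :
    ∀ h : ℝ, 0 < h →
      ∀ z : ℂ, ((h + 1 : ℝ) : ℂ) * z ^ 2 +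
        ((2 * η + 2 * η * (1 - ρ) * h - h - 1 : ℝ) : ℂ) * z +
        ((2 * η * ρ * h : ℝ) : ℂ) = 0 →
        ‖z‖ < 1 := by
  intro h hh z hz
  have hηρ : 2 * η * ρ < 1 := by
    rw [lt_div_iff₀ (by linarith)] at hη3
    linarith
  have hη : η < 1 := by nlinarith
  refine Complex.norm_lt_one_of_quadratic_eq_zero ?_ ?_ ?_ hz
  · nlinarith
  · nlinarith
  · nlinarith [mul_pos (mul_pos hη1 (by linarith : (0 : ℝ) < ρ)) hh]

/-- One-step-delay attack (τ=1): if ρ ∈ (1/2,1] and 0 < η < 1/(2ρ), then for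
every h > 0 both roots of
P(z)=(h+1)z²+(2η+2η(1-ρ)h-h-1)z+2ηρh lie strictly inside the unit disk. -/
theorem stmt15 (ρ η : ℝ) (hρ1 : 1 / 2 < ρ) (hρ2 : ρ ≤ 1)
    (hη1 : 0 < η) (hη2 : η < 1) (hη3 : η < 1 / (2 * ρ)) :
    ∀ h : ℝ, 0 < h →
      ∀ z : ℂ, ((h + 1 : ℝ) : ℂ) * z ^ 2 +
        ((2 * η + 2 * η * (1 - ρ) * h - h - 1 : ℝ) : ℂ) * z +
        ((2 * η * ρ * h : ℝ) : ℂ) = 0 →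
        ‖z‖ < 1 :=
  stmt15_general ρ η hρ1 hη1 hη3
end

section
/- Let λ_o > 0, s'(λ_o) > 0, w'(λ_o) < 0, and η ∈ (0,1). Suppose the estimated derivative w̃ satisfies w̃ < 0 and the relative error E_w = (w'(λ_o) − w̃)/w'(λ_o) satisfies E_w < (1 − η)(1 − s'(λ_o)/w'(λ_o)). Then 0 < 2η/(s'(λ_o) − w̃) < 2/(s'(λ_o) − w'(λ_o)); in particular, since 1 − s'(λ_o)/w'(λ_o) > 1, the condition E_w < 1 − η suffices. -/
/-!
Multiplying the error bound by `w'(λ_o) < 0` turns it into `η (s' - w') < s' - w̃`, which is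
exactly the upper bound on the gain after clearing the (then positive) denominators.
-/

lemma mul_sub_lt_sub_of_relErr_lt {s w w' η : ℝ} (hw : w < 0)
    (h : (w - w') / w < (1 - η) * (1 - s / w)) : η * (s - w) < s - w' := by
  have h' : (1 - η) * (1 - s / w) * w < w - w' := (div_lt_iff_of_neg hw).mp h
  have hexp : (1 - η) * (1 - s / w) * w = (1 - η) * (w - s) := by
    field_simp [hw.ne]
  linarith

lemma one_lt_one_sub_div_of_pos_of_neg {s w : ℝ} (hs : 0 < s) (hw : w < 0) :
    1 < 1 - s / w := by
  linarith [div_neg_of_pos_of_neg hs hw]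

lemma two_mul_div_pos_and_lt_of_mul_lt {a b η : ℝ} (hη : 0 < η) (ha : 0 < a) (h : η * a < b) :
    0 < 2 * η / b ∧ 2 * η / b < 2 / a := by
  have hb : 0 < b := (mul_pos hη ha).trans h
  refine ⟨by positivity, ?_⟩
  rw [div_lt_div_iff₀ hb ha]
  linarith

theorem stmt16_general (sd wd wt η : ℝ) (hsd : 0 < sd) (hwd : wd < 0)
    (hη1 : 0 < η) (hη2 : η < 1)
    (hEw : (wd - wt) / wd < (1 - η) * (1 - sd / wd)) :
    (0 < 2 * η / (sd - wt) ∧ 2 * η / (sd - wt) < 2 / (sd - wd)) ∧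
    1 < 1 - sd / wd ∧
    ((wd - wt) / wd < 1 - η → (wd - wt) / wd < (1 - η) * (1 - sd / wd)) := by
  have hfactor : 1 < 1 - sd / wd := one_lt_one_sub_div_of_pos_of_neg hsd hwd
  refine ⟨two_mul_div_pos_and_lt_of_mul_lt hη1 (by linarith) (mul_sub_lt_sub_of_relErr_lt hwd hEw), hfactor,
    fun h => h.trans_le ?_⟩
  exact le_mul_of_one_le_right (by linarith) hfactor.le

/-- Robustness to estimation error: if the estimate w̃ < 0 of w'(λ_o) has
relative error E_w = (w'(λ_o) - w̃)/w'(λ_o) < (1-η)(1 - s'(λ_o)/w'(λ_o)), then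
0 < 2η/(s'(λ_o) - w̃) < 2/(s'(λ_o) - w'(λ_o)); since 1 - s'(λ_o)/w'(λ_o) > 1,
the condition E_w < 1 - η suffices. -/
theorem stmt16 (lo sd wd wt η : ℝ) (hlo : 0 < lo) (hsd : 0 < sd) (hwd : wd < 0)
    (hη1 : 0 < η) (hη2 : η < 1) (hwt : wt < 0)
    (hEw : (wd - wt) / wd < (1 - η) * (1 - sd / wd)) :
    (0 < 2 * η / (sd - wt) ∧ 2 * η / (sd - wt) < 2 / (sd - wd)) ∧
    1 < 1 - sd / wd ∧
    ((wd - wt) / wd < 1 - η → (wd - wt) / wd < (1 - η) * (1 - sd / wd)) :=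
  stmt16_general sd wd wt η hsd hwd hη1 hη2 hEw
end
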